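/- For T, S ∈ B(X), if there exist sequences (x_n) in S_X and (x_n*) in S_{X*} with x_n*(x_n) = 1 for all n such that lim |x_n*(T x_n)| = v(T) and lim |x_n*(S x_n)| = v(S), then T ∥_v S, i.e., v(T + λS) = v(T) + v(S) for some unimodular λ. -/

import Mathlib

open Filter Topology

variable {𝕜 : Type*} [RCLike 𝕜] {X : Type*} [NormedAddCommGroup X] [NormedSpace 𝕜 X]

/-- The numerical radius of a bounded linear operator on a normed space:
`v(T) = sup {|x*(Tx)| : x ∈ S_X, x* ∈ J(x)}`. -/
noncomputable def nrad (T : X →L[𝕜] X) : ℝ :=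
  sSup {r : ℝ | ∃ (x : X) (f : X →L[𝕜] 𝕜), ‖x‖ = 1 ∧ ‖f‖ = 1 ∧ f x = 1 ∧ r = ‖f (T x)‖}

/-- Numerical radius parallelism: `T ∥_v S`. -/
def NRadParallel (T S : X →L[𝕜] X) : Prop :=
  ∃ lam : 𝕜, ‖lam‖ = 1 ∧ nrad (T + lam • S) = nrad T + nrad S

/-- Numerical radius Birkhoff orthogonality: `T ⊥_{vB} S`. -/
def NRadBirkhoff (T S : X →L[𝕜] X) : Prop :=
  ∀ α : 𝕜, nrad T ≤ nrad (T + α • S)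

/-!
The numbers `f n (T (x n))` and `f n (S (x n))` are bounded by `‖T‖` and `‖S‖`, so along a
subsequence they converge to some `α`, `β` with `‖α‖ = v(T)` and `‖β‖ = v(S)`. A unimodular `λ`
rotating `λ β` onto the ray of `α` gives `v(T + λ S) ≥ ‖α + λ β‖ = v(T) + v(S)`, and the reverse
inequality is the triangle inequality.
-/

lemma RCLike.exists_norm_eq_one_eq_norm_mul (a : 𝕜) : ∃ u : 𝕜, ‖u‖ = 1 ∧ a = ‖a‖ * u := by
  by_cases ha : a = 0
  · exact ⟨1, norm_one, by simp [ha]⟩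
  have hna : (‖a‖ : 𝕜) ≠ 0 := by simpa using ha
  refine ⟨a / ‖a‖, ?_, by field_simp⟩
  rw [norm_div, RCLike.norm_ofReal, abs_norm, div_self (norm_ne_zero_iff.mpr ha)]

lemma RCLike.exists_norm_eq_one_norm_add_mul (a b : 𝕜) :
    ∃ l : 𝕜, ‖l‖ = 1 ∧ ‖a + l * b‖ = ‖a‖ + ‖b‖ := by
  obtain ⟨u, hu, hau⟩ := exists_norm_eq_one_eq_norm_mul a
  obtain ⟨v, hv, hbv⟩ := exists_norm_eq_one_eq_norm_mul b
  have hv0 : v ≠ 0 := norm_ne_zero_iff.mp (by rw [hv]; exact one_ne_zero)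
  refine ⟨u / v, by rw [norm_div, hu, hv, div_one], ?_⟩
  have : a + u / v * b = ((‖a‖ + ‖b‖ : ℝ) : 𝕜) * u :=
    calc a + u / v * b = ‖a‖ * u + u / v * (‖b‖ * v) := by rw [← hau, ← hbv]
      _ = ((‖a‖ + ‖b‖ : ℝ) : 𝕜) * u := by push_cast; field_simp
  rw [this, norm_mul, hu, mul_one, RCLike.norm_ofReal, abs_of_nonneg (by positivity)]

lemma norm_apply_apply_le_opNorm {T : X →L[𝕜] X} {x : X} {f : X →L[𝕜] 𝕜}
    (hx : ‖x‖ = 1) (hf : ‖f‖ = 1) : ‖f (T x)‖ ≤ ‖T‖ :=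
  calc ‖f (T x)‖ ≤ ‖f‖ * (‖T‖ * ‖x‖) := f.le_opNorm_of_le (T.le_opNorm x)
    _ = ‖T‖ := by rw [hf, hx, one_mul, mul_one]

lemma nrad_bddAbove (T : X →L[𝕜] X) :
    BddAbove {r : ℝ | ∃ (x : X) (f : X →L[𝕜] 𝕜), ‖x‖ = 1 ∧ ‖f‖ = 1 ∧ f x = 1 ∧ r = ‖f (T x)‖} := by
  refine ⟨‖T‖, ?_⟩
  rintro r ⟨x, f, hx, hf, -, rfl⟩
  exact norm_apply_apply_le_opNorm hx hf

lemma norm_apply_apply_le_nrad (T : X →L[𝕜] X) {x : X} {f : X →L[𝕜] 𝕜}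
    (hx : ‖x‖ = 1) (hf : ‖f‖ = 1) (hfx : f x = 1) : ‖f (T x)‖ ≤ nrad T :=
  le_csSup (nrad_bddAbove T) ⟨x, f, hx, hf, hfx, rfl⟩

lemma nrad_nonneg (T : X →L[𝕜] X) : 0 ≤ nrad T :=
  Real.sSup_nonneg <| by rintro r ⟨x, f, -, -, -, rfl⟩; exact norm_nonneg _

/-- `0 ≤ c` is needed when `X` has no states, since then `nrad T = sSup ∅ = 0`. -/
lemma nrad_le_of_forall {T : X →L[𝕜] X} {c : ℝ} (hc : 0 ≤ c)
    (h : ∀ (x : X) (f : X →L[𝕜] 𝕜), ‖x‖ = 1 → ‖f‖ = 1 → f x = 1 → ‖f (T x)‖ ≤ c) :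
    nrad T ≤ c :=
  Real.sSup_le (by rintro r ⟨x, f, hx, hf, hfx, rfl⟩; exact h x f hx hf hfx) hc

lemma nrad_add_smul_le (T S : X →L[𝕜] X) (l : 𝕜) :
    nrad (T + l • S) ≤ nrad T + ‖l‖ * nrad S := by
  refine nrad_le_of_forall (by positivity [nrad_nonneg T, nrad_nonneg S]) fun x f hx hf hfx => ?_
  calc ‖f ((T + l • S) x)‖ = ‖f (T x) + l * f (S x)‖ := by simp
    _ ≤ ‖f (T x)‖ + ‖l‖ * ‖f (S x)‖ := (norm_add_le _ _).trans_eq (by rw [norm_mul])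
    _ ≤ nrad T + ‖l‖ * nrad S := by
      gcongr
      · exact norm_apply_apply_le_nrad T hx hf hfx
      · exact norm_apply_apply_le_nrad S hx hf hfx

lemma norm_le_nrad_of_tendsto {T : X →L[𝕜] X} {x : ℕ → X} {f : ℕ → X →L[𝕜] 𝕜} {z : 𝕜}
    (hx : ∀ n, ‖x n‖ = 1) (hf : ∀ n, ‖f n‖ = 1) (hfx : ∀ n, f n (x n) = 1)
    (hz : Tendsto (fun n => f n (T (x n))) atTop (𝓝 z)) : ‖z‖ ≤ nrad T :=
  le_of_tendsto' hz.norm fun n => norm_apply_apply_le_nrad T (hx n) (hf n) (hfx n)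

theorem stmt6 (T S : X →L[𝕜] X)
    (x : ℕ → X) (f : ℕ → (X →L[𝕜] 𝕜))
    (hx : ∀ n, ‖x n‖ = 1) (hf : ∀ n, ‖f n‖ = 1) (hfx : ∀ n, f n (x n) = 1)
    (hT : Tendsto (fun n => ‖f n (T (x n))‖) atTop (𝓝 (nrad T)))
    (hS : Tendsto (fun n => ‖f n (S (x n))‖) atTop (𝓝 (nrad S))) :
    NRadParallel T S := by
  set p : ℕ → 𝕜 × 𝕜 := fun n => (f n (T (x n)), f n (S (x n)))
  have hp : ∀ n, p n ∈ Metric.closedBall 0 (max ‖T‖ ‖S‖) := fun n => by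
    rw [mem_closedBall_zero_iff, Prod.norm_def]
    exact max_le_max (norm_apply_apply_le_opNorm (hx n) (hf n))
      (norm_apply_apply_le_opNorm (hx n) (hf n))
  obtain ⟨⟨α, β⟩, -, φ, hφ, hpφ⟩ := tendsto_subseq_of_bounded Metric.isBounded_closedBall hp
  have hα : ‖α‖ = nrad T :=
    tendsto_nhds_unique (hpφ.fst_nhds.norm) (hT.comp hφ.tendsto_atTop)
  have hβ : ‖β‖ = nrad S :=
    tendsto_nhds_unique (hpφ.snd_nhds.norm) (hS.comp hφ.tendsto_atTop)
  obtain ⟨l, hl, hαβ⟩ := RCLike.exists_norm_eq_one_norm_add_mul α β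
  refine ⟨l, hl, le_antisymm (by simpa [hl] using nrad_add_smul_le T S l) ?_⟩
  rw [← hα, ← hβ, ← hαβ]
  refine norm_le_nrad_of_tendsto (fun k => hx (φ k)) (fun k => hf (φ k)) (fun k => hfx (φ k)) ?_
  simpa using hpφ.fst_nhds.add (hpφ.snd_nhds.const_mul l)
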